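/- Let A ⊆ R be commutative rings and I an ideal of R. Then I is a D_{R|A}-ideal (i.e., δ(I) ⊆ I for every A-linear differential operator δ on R) if and only if I⟨n⟩_A = I for every integer n ≥ 1. -/

import Mathlib

/-- The `A`-linear differential operators on `R` of order at most `n`,
defined inductively: `D^0` consists of the `R`-linear endomorphisms (multiplications),
and `δ ∈ D^{n+1}` iff `[δ, r] ∈ D^n` for all `r : R`. -/
def DiffOp (A R : Type*) [CommRing A] [CommRing R] [Algebra A R] : ℕ → Set (R →ₗ[A] R)
  | 0 => {δ | ∃ s : R, ∀ x : R, δ x = s * x}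
  | n + 1 => {δ | ∀ r : R,
      δ ∘ₗ LinearMap.mulLeft A r - LinearMap.mulLeft A r ∘ₗ δ ∈ DiffOp A R n}

/-- The `n`-th `A`-linear differential power of an ideal `I ⊆ R`:
`I⟨n⟩_A = {f ∈ R | δ f ∈ I for all δ ∈ D^{n-1}_{R|A}}`. -/
def diffPower (A : Type*) {R : Type*} [CommRing A] [CommRing R] [Algebra A R]
    (I : Ideal R) (n : ℕ) : Set R :=
  {f : R | ∀ δ ∈ DiffOp A R (n - 1), δ f ∈ I}

namespace DiffOp

variable {A R : Type*} [CommRing A] [CommRing R] [Algebra A R]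

lemma mem_succ_of_mem {n : ℕ} {δ : R →ₗ[A] R} (h : δ ∈ DiffOp A R n) :
    δ ∈ DiffOp A R (n + 1) := by
  induction n generalizing δ with
  | zero =>
    obtain ⟨s, hs⟩ := h
    intro r
    refine ⟨0, fun x => ?_⟩
    simp only [LinearMap.sub_apply, LinearMap.comp_apply, LinearMap.mulLeft_apply, hs]
    ring
  | succ n ih => exact fun r => ih (h r)

lemma mono : Monotone (DiffOp A R) :=
  monotone_nat_of_le_succ fun _ _ => mem_succ_of_mem

lemma id_mem (n : ℕ) : (LinearMap.id : R →ₗ[A] R) ∈ DiffOp A R n :=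
  mono (Nat.zero_le n) ⟨1, fun x => (one_mul x).symm⟩

end DiffOp

lemma diffPower_subset (A : Type*) {R : Type*} [CommRing A] [CommRing R] [Algebra A R]
    (I : Ideal R) (n : ℕ) : diffPower A I n ⊆ I :=
  fun _ hf => hf LinearMap.id (DiffOp.id_mem (n - 1))

/-- An ideal `I` is a `D_{R|A}`-ideal (stable under all `A`-linear differential
operators) if and only if `I⟨n⟩_A = I` for every `n ≥ 1`. -/
theorem isDIdeal_iff_diffPower_eq (A R : Type*) [CommRing A] [CommRing R] [Algebra A R]
    (I : Ideal R) :
    (∀ n : ℕ, ∀ δ ∈ DiffOp A R n, ∀ f ∈ I, δ f ∈ I) ↔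
      (∀ n : ℕ, 1 ≤ n → diffPower A I n = (I : Set R)) := by
  constructor
  · intro hI n _
    exact (diffPower_subset A I n).antisymm fun f hf δ hδ => hI _ δ hδ f hf
  · intro hI n δ hδ f hf
    have hf' : f ∈ diffPower A I (n + 1) := (hI (n + 1) (Nat.le_add_left 1 n)).symm ▸ hf
    exact hf' δ hδ
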